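/- arXiv:2404.16352 — 2 statements merged into one kernel-verified Lean document; each statement's English description precedes it below -/
import Mathlib

section
/- (Three-gap structure at n = n_m) Let α be irrational, let s_m, n_m, η_m be defined as usual, and fix m ≥ 1. Consider the first n = n_m points of the Kronecker sequence iα mod 1, sorted in increasing order as 0 = x⁽⁰⁾ < x⁽¹⁾ < ⋯ < x⁽ⁿ⁻¹⁾ < 1 = x⁽ⁿ⁾. Then among the n consecutive gap lengths x⁽ⁱ⁺¹⁾ − x⁽ⁱ⁾, exactly s_{m−1} are equal to η_m and exactly s_m are equal to η_{m−1}. -/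
open scoped BigOperators

/-- The Gauss-map iterates: `alphaSeq α m` is `α_m`. -/
noncomputable def alphaSeq (α : ℝ) : ℕ → ℝ
  | 0 => Int.fract α
  | m + 1 => Int.fract (1 / alphaSeq α m)

/-- Partial quotients of the continued fraction of `α`: `partialQuot α (m+1) = a_{m+1} = ⌊1/α_m⌋`. -/
noncomputable def partialQuot (α : ℝ) : ℕ → ℕ
  | 0 => (⌊α⌋).toNat
  | m + 1 => (⌊1 / alphaSeq α m⌋).toNat

/-- `eta α (m+1) = η_m = ∏_{j=0}^m α_j`, with `eta α 0 = η_{-1} = 1`. -/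
noncomputable def eta (α : ℝ) : ℕ → ℝ
  | 0 => 1
  | m + 1 => eta α m * alphaSeq α m

/-- `denomSeq α m = s_m`. -/
noncomputable def denomSeq (α : ℝ) : ℕ → ℕ
  | 0 => 1
  | 1 => partialQuot α 1
  | m + 2 => partialQuot α (m + 2) * denomSeq α (m + 1) + denomSeq α m

/-- `denomPred α m = s_{m-1}`, with `s_{-1} = 0`. -/
noncomputable def denomPred (α : ℝ) : ℕ → ℕ
  | 0 => 0
  | m + 1 => denomSeq α m

/-- `nSeq α m = n_m = s_m + s_{m-1}` (so `n_0 = 1`). -/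
noncomputable def nSeq (α : ℝ) (m : ℕ) : ℕ := denomSeq α m + denomPred α m

/-- The Kronecker sequence `x_i = iα mod 1`. -/
noncomputable def kron (α : ℝ) (i : ℕ) : ℝ := Int.fract (i * α)

/-- Fill distance of the first `n` points of `x` in `[0,1]`. -/
noncomputable def fillDist (x : ℕ → ℝ) (n : ℕ) : ℝ :=
  ⨆ y : Set.Icc (0:ℝ) 1, ⨅ i : Fin n, |(y : ℝ) - x i|

/-- Separation radius of the first `n` points of `x`. -/
noncomputable def sepRad (x : ℕ → ℝ) (n : ℕ) : ℝ :=
  (1 / 2) * ⨅ p : {p : Fin n × Fin n // p.1 < p.2}, |x p.1.1 - x p.1.2|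

/-- The first `n` Kronecker points, sorted increasingly. -/
noncomputable def sortedKron (α : ℝ) (n : ℕ) : List ℝ :=
  ((Finset.range n).image (kron α)).sort (· ≤ ·)

/-- The `n` consecutive gap lengths of the first `n` Kronecker points,
including the wrap-around gap up to `1`. -/
noncomputable def kronGaps (α : ℝ) (n : ℕ) : List ℝ :=
  List.zipWith (fun a b => b - a) (sortedKron α n) ((sortedKron α n).tail ++ [1])

/-!
With `q_j = denomSeq α j`, `p_j = numSeq α j` and `β = Int.fract α` one has
`q_j β - p_j = (-1)^j η_j` and `p_{j+1} q_j - p_j q_{j+1} = (-1)^j`. Writing an integer `k` in the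
basis `q_m, q_{m-1}` therefore shows that every `k` with `0 < |k| < n = q_m + q_{m-1}` has
`{k α} ≥ η_m`, and that `{k α} < η_{m-1}` only for `k = (-1)^m q_m`. Since `0` is one of the points,
the gaps of the first `n` points are their circular gaps, and the gap after `x_u` is the least
`{(w - u) α}` over `w < n`, `w ≠ u`. So it is `η_m` when `u + (-1)^m q_m` is an index `< n`,
which happens for exactly `n - q_m = q_{m-1}` values of `u`, and otherwise `η_{m-1}`, attained at
`w = u + (-1)^{m-1} q_{m-1}`.
-/

lemma alphaSeq_nonneg (α : ℝ) (m : ℕ) : 0 ≤ alphaSeq α m := by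
  cases m <;> exact Int.fract_nonneg _

lemma alphaSeq_lt_one (α : ℝ) (m : ℕ) : alphaSeq α m < 1 := by
  cases m <;> exact Int.fract_lt_one _

lemma one_div_alphaSeq (α : ℝ) (m : ℕ) :
    1 / alphaSeq α m = partialQuot α (m + 1) + alphaSeq α (m + 1) := by
  have hfloor : ((partialQuot α (m + 1) : ℕ) : ℝ) = ⌊1 / alphaSeq α m⌋ := by
    rw [partialQuot, Int.floor_toNat]
    exact_mod_cast Int.natCast_floor_eq_floor (one_div_nonneg.mpr (alphaSeq_nonneg α m))
  rw [hfloor, alphaSeq, Int.floor_add_fract]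

/-- Numerators `p_j` of the convergents of `Int.fract α`. -/
noncomputable def numSeq (α : ℝ) : ℕ → ℕ
  | 0 => 0
  | 1 => 1
  | j + 2 => partialQuot α (j + 2) * numSeq α (j + 1) + numSeq α j

lemma numSeq_mul_denomSeq_sub (α : ℝ) (j : ℕ) :
    (numSeq α (j + 1) * denomSeq α j - numSeq α j * denomSeq α (j + 1) : ℤ) = (-1) ^ j := by
  induction j with
  | zero => simp [numSeq, denomSeq]
  | succ j ih =>
    simp only [numSeq, denomSeq, Nat.cast_add, Nat.cast_mul]
    linear_combination (-1 : ℤ) * ih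

lemma mul_nonneg_of_abs_mul_sub_mul_lt {a b X Y : ℤ} (ha : 0 ≤ a) (hb : 0 ≤ b)
    (h : |X * a - Y * b| < a + b) : 0 ≤ X * Y := by
  rw [abs_lt] at h
  by_contra! hXY
  rcases mul_neg_iff.mp hXY with ⟨hX, hY⟩ | ⟨hX, hY⟩ <;> nlinarith

section ContinuedFraction

variable {α : ℝ} (hirr : Irrational α)
include hirr

lemma alphaSeq_pos (m : ℕ) : 0 < alphaSeq α m := by
  suffices Irrational (alphaSeq α m) from
    (alphaSeq_nonneg α m).lt_of_ne fun h => this.ne_int 0 (by simp [h])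
  induction m with
  | zero => exact hirr.sub_intCast _
  | succ m ih => simpa only [alphaSeq, one_div, Int.fract] using ih.inv.sub_intCast _

lemma one_le_partialQuot_succ (m : ℕ) : 1 ≤ partialQuot α (m + 1) := by
  have h := one_div_alphaSeq α m
  have : 1 < 1 / alphaSeq α m :=
    one_lt_one_div (alphaSeq_pos hirr m) (alphaSeq_lt_one α m)
  by_contra! h0
  have : partialQuot α (m + 1) = 0 := by omega
  simp only [this, Nat.cast_zero, zero_add] at h
  linarith [alphaSeq_lt_one α (m + 1)]

lemma eta_pos (j : ℕ) : 0 < eta α j := by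
  induction j with
  | zero => exact one_pos
  | succ j ih => exact mul_pos ih (alphaSeq_pos hirr j)

lemma eta_strictAnti : StrictAnti (eta α) :=
  strictAnti_nat_of_succ_lt fun j =>
    mul_lt_of_lt_one_right (eta_pos hirr j) (alphaSeq_lt_one α j)

lemma eta_succ_lt_one (j : ℕ) : eta α (j + 1) < 1 :=
  eta_strictAnti hirr j.succ_pos

lemma eta_eq_partialQuot_mul_add (j : ℕ) :
    eta α j = partialQuot α (j + 1) * eta α (j + 1) + eta α (j + 2) := by
  have h := one_div_alphaSeq α j
  have hpos := alphaSeq_pos hirr j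
  simp only [eta]
  field_simp at h
  linear_combination eta α j * h

lemma denomSeq_le_succ (j : ℕ) : denomSeq α j ≤ denomSeq α (j + 1) := by
  cases j with
  | zero => exact one_le_partialQuot_succ hirr 0
  | succ j =>
    have := one_le_partialQuot_succ hirr (j + 1)
    show _ ≤ partialQuot α (j + 2) * denomSeq α (j + 1) + denomSeq α j
    nlinarith

lemma denomSeq_mul_fract_sub_numSeq :
    ∀ j, denomSeq α j * Int.fract α - numSeq α j = (-1) ^ j * eta α (j + 1)
  | 0 => by simp [denomSeq, numSeq, eta, alphaSeq]
  | 1 => by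
    have h := one_div_alphaSeq α 0
    have hpos := alphaSeq_pos hirr 0
    simp only [denomSeq, numSeq, eta, Nat.cast_one, one_mul]
    field_simp at h
    simp only [alphaSeq] at h ⊢
    linear_combination -h
  | j + 2 => by
    simp only [denomSeq, numSeq, Nat.cast_add, Nat.cast_mul]
    linear_combination (partialQuot α (j + 2) : ℝ) * denomSeq_mul_fract_sub_numSeq (j + 1)
      + denomSeq_mul_fract_sub_numSeq j + (-1) ^ j * eta_eq_partialQuot_mul_add hirr (j + 1)

/-- Unimodularity of `(q_{j+1}, q_j; p_{j+1}, p_j)` lets us write `k = X q_{j+1} - Y q_j`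
up to sign; the errors `q_j α - p_j` then turn `k α - p` into `X η_{j+1} + Y η_j`. -/
lemma exists_intCast_mul_sub_eq (j : ℕ) (k p : ℤ) : ∃ X Y : ℤ,
    (-1) ^ (j + 1) * k = X * denomSeq α (j + 1) - Y * denomSeq α j ∧
      k * α - p = X * eta α (j + 2) + Y * eta α (j + 1) := by
  set p' := p - k * ⌊α⌋
  have hunimod := numSeq_mul_denomSeq_sub α j
  refine ⟨k * numSeq α j - p' * denomSeq α j, k * numSeq α (j + 1) - p' * denomSeq α (j + 1),
    by linear_combination k * hunimod, ?_⟩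
  have hα : (k : ℝ) * α - p = k * Int.fract α - p' := by
    simp only [p', Int.fract]; push_cast; ring
  have hunimodR : (numSeq α (j + 1) * denomSeq α j - numSeq α j * denomSeq α (j + 1) : ℝ)
      = (-1) ^ j := by exact_mod_cast hunimod
  have hsqR : ((-1 : ℝ) ^ j) ^ 2 = 1 := by rw [← pow_mul, mul_comm, pow_mul]; norm_num
  push_cast
  rw [hα]
  linear_combination (-(-1) ^ j * ((k : ℝ) * numSeq α j - p' * denomSeq α j))
      * denomSeq_mul_fract_sub_numSeq hirr (j + 1)
    + (-1) ^ j * ((k : ℝ) * numSeq α (j + 1) - p' * denomSeq α (j + 1))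
      * denomSeq_mul_fract_sub_numSeq hirr j
    - (-1) ^ j * (k * Int.fract α - p') * hunimodR
    + (((k : ℝ) * numSeq α j - p' * denomSeq α j) * eta α (j + 2)
      + ((k : ℝ) * numSeq α (j + 1) - p' * denomSeq α (j + 1)) * eta α (j + 1)
      - (k * Int.fract α - p')) * hsqR

/-- Write `Int.fract (k * α) = X η_{M+1} + Y η_M` by `exists_intCast_mul_sub_eq`: the bound on
`|k|` forces `X Y ≥ 0`, and then `Y = 0` and `X = 1`. -/
lemma fract_intCast_mul_lt_eta (M : ℕ) {k : ℤ} (hk : k ≠ 0)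
    (hkn : |k| < denomSeq α (M + 1) + denomSeq α M) (hlt : Int.fract (k * α) < eta α (M + 1)) :
    k = (-1) ^ (M + 1) * denomSeq α (M + 1) ∧ Int.fract (k * α) = eta α (M + 2) := by
  obtain ⟨X, Y, hk_eq, hfract⟩ := exists_intCast_mul_sub_eq hirr M k ⌊k * α⌋
  rw [Int.self_sub_floor] at hfract
  have habs : |X * denomSeq α (M + 1) - Y * denomSeq α M| = |k| := by
    rw [← hk_eq, abs_mul, abs_pow, abs_neg, abs_one, one_pow, one_mul]
  have hXY : 0 ≤ X * Y := mul_nonneg_of_abs_mul_sub_mul_lt (by positivity) (by positivity)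
    (habs ▸ hkn)
  have hη₁ := eta_pos hirr (M + 1)
  have hη₂ := eta_pos hirr (M + 2)
  have hfract_nonneg := Int.fract_nonneg (k * α)
  have hY : Y = 0 := by
    rcases lt_trichotomy Y 0 with hY | hY | hY
    · have hX : (X : ℝ) ≤ 0 := by exact_mod_cast nonpos_of_mul_nonneg_left hXY hY
      have : (Y : ℝ) ≤ -1 := by exact_mod_cast Int.le_sub_one_of_lt hY
      nlinarith
    · exact hY
    · have hX : (0 : ℝ) ≤ X := by exact_mod_cast nonneg_of_mul_nonneg_left hXY hY
      have : (1 : ℝ) ≤ Y := by exact_mod_cast hY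
      nlinarith
  subst hY
  have hX : X = 1 := by
    have hq : (denomSeq α M : ℤ) ≤ denomSeq α (M + 1) := by
      exact_mod_cast denomSeq_le_succ hirr M
    have hX0 : 0 ≤ X := by
      simp only [Int.cast_zero, zero_mul, add_zero] at hfract
      exact_mod_cast nonneg_of_mul_nonneg_left (hfract ▸ hfract_nonneg) hη₂
    have hXne : X ≠ 0 := by rintro rfl; simp [hk] at hk_eq
    rw [zero_mul, sub_zero, abs_of_nonneg (by positivity)] at habs
    by_contra hX1
    have : 2 ≤ X := by omega
    nlinarith
  subst hX
  constructor
  · rcases neg_one_pow_eq_or ℤ (M + 1) with h | h <;> rw [h] at hk_eq ⊢ <;> linarith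
  · simpa using hfract

lemma eta_le_fract_intCast_mul (M : ℕ) {k : ℤ} (hk : k ≠ 0)
    (hkn : |k| < denomSeq α (M + 1) + denomSeq α M) : eta α (M + 2) ≤ Int.fract (k * α) := by
  by_contra! hlt
  have hlt' := hlt.trans (eta_strictAnti hirr (M + 1).lt_succ_self)
  exact hlt.ne (fract_intCast_mul_lt_eta hirr M hk hkn hlt').2

lemma fract_neg_one_pow_mul_denomSeq (j : ℕ) :
    Int.fract ((((-1) ^ j * denomSeq α j : ℤ) : ℝ) * α) = eta α (j + 1) := by
  rw [Int.fract_eq_iff]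
  refine ⟨(eta_pos hirr _).le, eta_succ_lt_one hirr j,
    (-1) ^ j * (numSeq α j + denomSeq α j * ⌊α⌋), ?_⟩
  have hsq : ((-1 : ℝ) ^ j) ^ 2 = 1 := by rw [← pow_mul, mul_comm, pow_mul]; norm_num
  push_cast
  linear_combination (-1 : ℝ) ^ j * denomSeq_mul_fract_sub_numSeq hirr j
    - (-1) ^ j * denomSeq α j * Int.floor_add_fract α + eta α (j + 1) * hsq

end ContinuedFraction

noncomputable def nextOrOne (S : Finset ℝ) (t : ℝ) : ℝ :=
  if h : (S.filter (t < ·)).Nonempty then (S.filter (t < ·)).min' h else 1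

lemma nextOrOne_eq_of_isLeast {S : Finset ℝ} {t x : ℝ} (h : IsLeast {y | y ∈ S ∧ t < y} x) :
    nextOrOne S t = x := by
  have hne : (S.filter (t < ·)).Nonempty := ⟨x, Finset.mem_filter.mpr h.1⟩
  rw [nextOrOne, dif_pos hne]
  exact (Finset.isLeast_min' _ hne).unique (by rwa [Finset.coe_filter])

lemma nextOrOne_eq_one {S : Finset ℝ} {t : ℝ} (h : ∀ y ∈ S, y ≤ t) : nextOrOne S t = 1 := by
  rw [nextOrOne, dif_neg]
  rintro ⟨y, hy⟩
  rw [Finset.mem_filter] at hy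
  exact (h y hy.1).not_gt hy.2

lemma zipWith_sort_tail_eq_map (S : Finset ℝ) :
    List.zipWith (fun a b => b - a) (S.sort (· ≤ ·)) ((S.sort (· ≤ ·)).tail ++ [1])
      = (S.sort (· ≤ ·)).map (fun t => nextOrOne S t - t) := by
  set L := S.sort (· ≤ ·)
  have hL : L.SortedLT := S.sortedLT_sort
  have hmem : ∀ {y}, y ∈ S → ∃ (j : ℕ) (hj : j < L.length), L[j] = y := fun hy =>
    List.mem_iff_getElem.mp ((Finset.mem_sort _).mpr hy)
  refine List.ext_getElem (by simp; omega) fun i h₁ h₂ => ?_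
  rw [List.getElem_zipWith, List.getElem_map]
  congr 1
  rcases lt_or_ge (i + 1) L.length with hi | hi
  · rw [List.getElem_append_left (by simp; omega), List.getElem_tail]
    refine (nextOrOne_eq_of_isLeast ⟨⟨(Finset.mem_sort _).mp (L.getElem_mem hi),
      hL.getElem_lt_getElem_of_lt i.lt_succ_self⟩, ?_⟩).symm
    rintro _ ⟨hy, hty⟩
    obtain ⟨j, hj, rfl⟩ := hmem hy
    rw [hL.getElem_lt_getElem_iff] at hty
    exact hL.getElem_le_getElem_iff.mpr hty
  · rw [List.getElem_append_right (by simp; omega)]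
    have hlast : nextOrOne S (L[i]'(by simpa using h₂)) = 1 := nextOrOne_eq_one fun y hy => by
      obtain ⟨j, hj, rfl⟩ := hmem hy
      exact hL.getElem_le_getElem_iff.mpr (by omega)
    simp [hlast]

lemma count_map_sort {α β : Type*} [LinearOrder α] [DecidableEq β] (S : Finset α) (f : α → β)
    (v : β) :
    ((S.sort (· ≤ ·)).map f).count v = (S.filter fun t => f t = v).card := by
  rw [← Multiset.coe_count, ← Multiset.map_coe, Finset.sort_eq, Multiset.count_map,
    Finset.card_def, Finset.filter_val]
  simp only [eq_comm]

/-- Since `0 ∈ S`, the wrap-around gap from the largest point to `1` is its circular distance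
to `0`. -/
lemma nextOrOne_eq_add_fract_sub {S : Finset ℝ} (hS : ∀ s ∈ S, 0 ≤ s ∧ s < 1) (h0 : 0 ∈ S)
    {t s : ℝ} (ht : t ∈ S) (hs : s ∈ S) (hpos : 0 < Int.fract (s - t))
    (hmin : ∀ y ∈ S, y ≠ t → Int.fract (s - t) ≤ Int.fract (y - t)) :
    nextOrOne S t = t + Int.fract (s - t) := by
  have hfract_of_lt : ∀ y ∈ S, t < y → Int.fract (y - t) = y - t := fun y hy hty =>
    Int.fract_eq_self.mpr ⟨by linarith, by linarith [(hS y hy).2, (hS t ht).1]⟩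
  have hfract_of_gt : ∀ y ∈ S, y < t → Int.fract (y - t) = y - t + 1 := fun y hy hyt =>
    Int.fract_eq_iff.mpr ⟨by linarith [(hS y hy).1, (hS t ht).2], by linarith, -1, by simp⟩
  rcases lt_or_ge t s with hts | hst
  · rw [hfract_of_lt s hs hts, add_sub_cancel]
    refine nextOrOne_eq_of_isLeast ⟨⟨hs, hts⟩, fun y ⟨hy, hty⟩ => ?_⟩
    have := hmin y hy hty.ne'
    rw [hfract_of_lt s hs hts, hfract_of_lt y hy hty] at this
    linarith
  · have hst' : s < t := hst.lt_of_ne (by rintro rfl; simp at hpos)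
    have hs0 : s ≤ 0 := by
      have h0t : (0 : ℝ) < t := (hS s hs).1.trans_lt hst'
      have := hmin 0 h0 h0t.ne
      rw [hfract_of_gt s hs hst', hfract_of_gt 0 h0 h0t] at this
      linarith
    have hlast : nextOrOne S t = 1 := nextOrOne_eq_one fun y hy => by
      by_contra! hty
      have := hmin y hy hty.ne'
      rw [hfract_of_gt s hs hst', hfract_of_lt y hy hty] at this
      linarith [(hS y hy).2, (hS s hs).1]
    rw [hlast, hfract_of_gt s hs hst']
    linarith [(hS s hs).1]

lemma fract_kron_sub_kron (α : ℝ) (u w : ℕ) :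
    Int.fract (kron α w - kron α u) = Int.fract ((((w : ℤ) - u : ℤ) : ℝ) * α) := by
  rw [kron, kron, Int.fract_eq_fract]
  exact ⟨⌊(u : ℝ) * α⌋ - ⌊(w : ℝ) * α⌋, by simp only [Int.fract]; push_cast; ring⟩

lemma nextOrOne_kron_eq {α : ℝ} {n u : ℕ} (hu : u < n) {k : ℤ}
    (hk : (u : ℤ) + k ∈ Finset.Ico 0 (n : ℤ)) (hpos : 0 < Int.fract (k * α))
    (hmin : ∀ k' : ℤ, k' ≠ 0 → (u : ℤ) + k' ∈ Finset.Ico 0 (n : ℤ) →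
      Int.fract (k * α) ≤ Int.fract (k' * α)) :
    nextOrOne ((Finset.range n).image (kron α)) (kron α u) = kron α u + Int.fract (k * α) := by
  rw [Finset.mem_Ico] at hk
  obtain ⟨w, hw⟩ : ∃ w : ℕ, (w : ℤ) = u + k := ⟨_, Int.toNat_of_nonneg hk.1⟩
  have hfract : Int.fract (kron α w - kron α u) = Int.fract (k * α) := by
    rw [fract_kron_sub_kron, hw, add_sub_cancel_left]
  rw [← hfract]
  refine nextOrOne_eq_add_fract_sub ?_ ?_ (Finset.mem_image_of_mem _ (Finset.mem_range.mpr hu))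
    (Finset.mem_image_of_mem _ (Finset.mem_range.mpr (by omega))) (hfract ▸ hpos) ?_
  · simp only [Finset.mem_image, forall_exists_index, and_imp]
    rintro _ v - rfl
    exact ⟨Int.fract_nonneg _, Int.fract_lt_one _⟩
  · exact Finset.mem_image.mpr ⟨0, Finset.mem_range.mpr (by omega), by simp [kron]⟩
  · simp only [Finset.mem_image, Finset.mem_range, forall_exists_index, and_imp]
    rintro _ v hv rfl hvu
    rw [hfract, fract_kron_sub_kron]
    exact hmin _ (fun h => hvu (by rw [show v = u by omega]))
      (by rw [Finset.mem_Ico]; omega)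

lemma card_filter_intCast_add_mem_Ico (n : ℕ) (k : ℤ) :
    ((Finset.range n).filter fun u : ℕ => (u : ℤ) + k ∈ Finset.Ico 0 (n : ℤ)).card
      = n - k.natAbs := by
  obtain ⟨a, rfl | rfl⟩ := Int.eq_nat_or_neg k
  · have : (Finset.range n).filter (fun u : ℕ => (u : ℤ) + a ∈ Finset.Ico 0 (n : ℤ))
        = Finset.range (n - a) := by
      ext
      simp only [Finset.mem_filter, Finset.mem_range, Finset.mem_Ico]
      omega
    rw [this, Finset.card_range, Int.natAbs_natCast]
  · have : (Finset.range n).filter (fun u : ℕ => (u : ℤ) + -a ∈ Finset.Ico 0 (n : ℤ))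
        = Finset.Ico a n := by
      ext
      simp only [Finset.mem_filter, Finset.mem_range, Finset.mem_Ico]
      omega
    rw [this, Nat.card_Ico, Int.natAbs_neg, Int.natAbs_natCast]

lemma card_filter_intCast_add_notMem_Ico (n : ℕ) {k : ℤ} (hk : k.natAbs ≤ n) :
    ((Finset.range n).filter fun u : ℕ => (u : ℤ) + k ∉ Finset.Ico 0 (n : ℤ)).card
      = k.natAbs := by
  have := Finset.card_filter_add_card_filter_not (s := Finset.range n)
    (fun u : ℕ => (u : ℤ) + k ∈ Finset.Ico 0 (n : ℤ))
  rw [card_filter_intCast_add_mem_Ico, Finset.card_range] at this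
  omega

section Kronecker

variable {α : ℝ} (hirr : Irrational α)
include hirr

lemma kron_injective : Function.Injective (kron α) := by
  intro u w h
  by_contra hne
  have hk : (w : ℤ) - u ≠ 0 := by omega
  obtain ⟨z, hz⟩ := Int.fract_eq_zero_iff.mp
    (by rw [← fract_kron_sub_kron, h, sub_self, Int.fract_zero] :
      Int.fract ((((w : ℤ) - u : ℤ) : ℝ) * α) = 0)
  exact (hirr.intCast_mul hk).ne_int z hz.symm

lemma count_kronGaps {n : ℕ} {g : ℕ → ℝ}
    (hg : ∀ u < n, nextOrOne ((Finset.range n).image (kron α)) (kron α u) - kron α u = g u)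
    (v : ℝ) : (kronGaps α n).count v = ((Finset.range n).filter fun u => g u = v).card := by
  rw [kronGaps, sortedKron, zipWith_sort_tail_eq_map, count_map_sort, Finset.filter_image,
    Finset.card_image_of_injOn (kron_injective hirr).injOn]
  exact congrArg Finset.card (Finset.filter_congr fun u hu => by rw [hg u (by simpa using hu)])

lemma nextOrOne_kron_sub_kron (M u : ℕ) (hu : u < denomSeq α (M + 1) + denomSeq α M) :
    nextOrOne ((Finset.range (denomSeq α (M + 1) + denomSeq α M)).image (kron α)) (kron α u)
        - kron α u
      = if (u : ℤ) + (-1) ^ (M + 1) * denomSeq α (M + 1)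
          ∈ Finset.Ico 0 ((denomSeq α (M + 1) + denomSeq α M : ℕ) : ℤ)
        then eta α (M + 2) else eta α (M + 1) := by
  have habs : ∀ k : ℤ, (u : ℤ) + k ∈ Finset.Ico 0 ((denomSeq α (M + 1) + denomSeq α M : ℕ) : ℤ)
      → |k| < denomSeq α (M + 1) + denomSeq α M := fun k hk => by
    rw [Finset.mem_Ico] at hk; push_cast at hk; rw [abs_lt]; omega
  split_ifs with hA
  · have hmin : ∀ k : ℤ, k ≠ 0 →
        (u : ℤ) + k ∈ Finset.Ico 0 ((denomSeq α (M + 1) + denomSeq α M : ℕ) : ℤ) →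
        Int.fract ((((-1) ^ (M + 1) * denomSeq α (M + 1) : ℤ) : ℝ) * α) ≤ Int.fract (k * α) :=
      fun k hk hkA => by
        rw [fract_neg_one_pow_mul_denomSeq hirr]
        exact eta_le_fract_intCast_mul hirr M hk (habs k hkA)
    rw [nextOrOne_kron_eq hu hA (by rw [fract_neg_one_pow_mul_denomSeq hirr]; exact eta_pos hirr _)
      hmin, fract_neg_one_pow_mul_denomSeq hirr, add_sub_cancel_left]
  · have hB : (u : ℤ) + (-1) ^ M * denomSeq α M
        ∈ Finset.Ico 0 ((denomSeq α (M + 1) + denomSeq α M : ℕ) : ℤ) := by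
      simp only [Finset.mem_Ico, pow_succ] at hA ⊢
      rcases neg_one_pow_eq_or ℤ M with h | h <;> rw [h] at hA ⊢ <;> push_cast at hA ⊢ <;> omega
    have hmin : ∀ k : ℤ, k ≠ 0 →
        (u : ℤ) + k ∈ Finset.Ico 0 ((denomSeq α (M + 1) + denomSeq α M : ℕ) : ℤ) →
        Int.fract ((((-1) ^ M * denomSeq α M : ℤ) : ℝ) * α) ≤ Int.fract (k * α) :=
      fun k hk hkB => by
        rw [fract_neg_one_pow_mul_denomSeq hirr]
        by_contra! hlt
        exact hA ((fract_intCast_mul_lt_eta hirr M hk (habs k hkB) hlt).1 ▸ hkB)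
    rw [nextOrOne_kron_eq hu hB (by rw [fract_neg_one_pow_mul_denomSeq hirr]; exact eta_pos hirr _)
      hmin, fract_neg_one_pow_mul_denomSeq hirr, add_sub_cancel_left]

end Kronecker

theorem kronGaps_count_at_nSeq_general (α : ℝ) (hirr : Irrational α)
    (m : ℕ) (hm : 1 ≤ m) :
    (kronGaps α (nSeq α m)).count (eta α (m + 1)) = denomSeq α (m - 1) ∧
      (kronGaps α (nSeq α m)).count (eta α m) = denomSeq α m := by
  obtain ⟨M, rfl⟩ : ∃ M, m = M + 1 := ⟨m - 1, by omega⟩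
  have hgap := nextOrOne_kron_sub_kron hirr M
  have hne : eta α (M + 2) ≠ eta α (M + 1) := (eta_strictAnti hirr (M + 1).lt_succ_self).ne
  have hk : ((-1) ^ (M + 1) * denomSeq α (M + 1) : ℤ).natAbs = denomSeq α (M + 1) := by
    simp [Int.natAbs_mul]
  simp only [nSeq, denomPred, add_tsub_cancel_right, count_kronGaps hirr hgap, ite_eq_left_iff,
    ite_eq_right_iff, hne, hne.symm, imp_false, not_not, card_filter_intCast_add_mem_Ico,
    card_filter_intCast_add_notMem_Ico _ (hk.trans_le le_self_add), hk, add_tsub_cancel_left,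
    and_self]

/-- Three-gap structure at `n = n_m`, `m ≥ 1`: among the `n` consecutive gap
lengths (including the wrap-around gap to `1`), exactly `s_{m-1}` equal `η_m`
and exactly `s_m` equal `η_{m-1}`. -/
theorem kronGaps_count_at_nSeq (α : ℝ) (hpos : 0 < α) (hirr : Irrational α)
    (m : ℕ) (hm : 1 ≤ m) :
    (kronGaps α (nSeq α m)).count (eta α (m + 1)) = denomSeq α (m - 1) ∧
      (kronGaps α (nSeq α m)).count (eta α m) = denomSeq α m :=
  kronGaps_count_at_nSeq_general α hirr m hm
end

section
/- Let α = (√5 − 1)/2 (the fractional part of the golden ratio). Then the Kronecker sequence x_i = iα mod 1 is quasi-uniform over [0,1], with mesh ratio ρ_n ≤ 4 for all n ≥ 2. -/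
open scoped BigOperators

/-!
Write `(√5 - 1) / 2 = -ψ =: α` and pick `p` with `F_p < n ≤ F_{p+1}`; both radii are comparable
to `α ^ p`.

Separation: the errors `F_{p+1} α - F_p = -ψ ^ (p+1)` and `F_p α - F_{p-1} = -ψ ^ p` have opposite
signs, and by Cassini the pairs `(F_{p+1}, F_p)`, `(F_p, F_{p-1})` form a basis of `ℤ²`. Expanding
`(k, K)` in this basis shows `|k α - K| ≥ α ^ p` whenever `0 < k < F_{p+1}`.

Covering: with `q = F_p` and `ε = q α - F_{p-1}`, the points `i α mod 1`, `i < q`, are exactly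
`(j + i ε) / q` for `j < q`, so each cell `[j/q, (j+1)/q]` is bracketed by two points, and
`q α ^ p ≥ 1/3` keeps their distance below `4 α ^ p`. The last cell is closed by
`F_e α mod 1 = 1 - α ^ e` for an even `e ∈ {p - 1, p}`. Hence the fill distance is at most
`2 α ^ p`, the separation radius at least `α ^ p / 2`.
-/

open Set
open scoped goldenRatio

theorem abs_mul_sub_le_abs_mul_sub_of_isUnit {θ : ℝ} {q₁ p₁ q₂ p₂ : ℤ} (hq₂ : 0 ≤ q₂)
    (hdet : IsUnit (q₁ * p₂ - q₂ * p₁)) (hsign : (q₁ * θ - p₁) * (q₂ * θ - p₂) ≤ 0)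
    {k K : ℤ} (hk : 0 < k) (hkq : k < q₁) : |q₂ * θ - p₂| ≤ |k * θ - K| := by
  set d := q₁ * p₂ - q₂ * p₁
  have hd : d * d = 1 := Int.isUnit_mul_self hdet
  -- coordinates of `(k, K)` in the basis `(q₁, p₁), (q₂, p₂)` of `ℤ²`
  set a := d * (k * p₂ - K * q₂)
  set b := d * (K * q₁ - k * p₁)
  have hk_eq : k = a * q₁ + b * q₂ := by linear_combination (-k) * hd
  have hK_eq : K = a * p₁ + b * p₂ := by linear_combination (-K) * hd
  have hb : b ≠ 0 := by
    rintro hb0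
    rw [hb0, zero_mul, add_zero] at hk_eq
    rcases le_or_gt a 0 with ha | ha <;> nlinarith
  have hab : a * b ≤ 0 := by
    by_contra! hab
    rcases pos_and_pos_or_neg_and_neg_of_mul_pos hab with ⟨ha, hb⟩ | ⟨ha, hb⟩ <;> nlinarith
  -- with `hsign`, this makes the two error terms below have the same sign, so they cannot cancel
  have hsplit : (k : ℝ) * θ - K = a * (q₁ * θ - p₁) + b * (q₂ * θ - p₂) := by
    rw [hk_eq, hK_eq]; push_cast; ring
  have hb1 : (1 : ℝ) ≤ |(b : ℝ)| := by exact_mod_cast Int.one_le_abs hb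
  have hab' : (0 : ℝ) ≤ (a * (q₁ * θ - p₁)) * (b * (q₂ * θ - p₂)) := by
    have : ((a * b : ℤ) : ℝ) ≤ 0 := by exact_mod_cast hab
    push_cast at this
    nlinarith
  calc |(q₂ : ℝ) * θ - p₂| ≤ |(b : ℝ) * (q₂ * θ - p₂)| := by
        rw [abs_mul]; exact le_mul_of_one_le_left (abs_nonneg _) hb1
    _ ≤ |(k : ℝ) * θ - K| := by
        rw [hsplit, ← sq_le_sq]; nlinarith

lemma exists_int_kron_sub_kron (θ : ℝ) (i j : ℕ) :
    ∃ K : ℤ, kron θ i - kron θ j = ((i : ℤ) - j : ℤ) * θ - K :=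
  ⟨⌊(i : ℝ) * θ⌋ - ⌊(j : ℝ) * θ⌋, by unfold kron Int.fract; push_cast; ring⟩

lemma le_sepRad {x : ℕ → ℝ} {n : ℕ} {d : ℝ} (hn : 2 ≤ n)
    (h : ∀ i j, i < j → j < n → d ≤ |x i - x j|) : d / 2 ≤ sepRad x n := by
  have : Nonempty {p : Fin n × Fin n // p.1 < p.2} :=
    ⟨⟨(⟨0, by omega⟩, ⟨1, by omega⟩), Fin.mk_lt_mk.2 zero_lt_one⟩⟩
  have : d ≤ ⨅ p : {p : Fin n × Fin n // p.1 < p.2}, |x p.1.1 - x p.1.2| :=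
    le_ciInf fun p => h _ _ p.2 p.1.2.2
  rw [sepRad]; linarith

lemma abs_sub_le_or_abs_sub_le_of_mem_Icc {a b y A B r : ℝ} (hy : y ∈ Icc a b)
    (hA : A - a ≤ r) (hB : b - B ≤ r) (hAB : B - A ≤ 2 * r) : |y - A| ≤ r ∨ |y - B| ≤ r := by
  rcases le_total y A with hyA | hAy
  · left; rw [abs_of_nonpos (by linarith)]; linarith [hy.1]
  rcases le_total B y with hBy | hyB
  · right; rw [abs_of_nonneg (by linarith)]; linarith [hy.2]
  rcases le_total (y - A) r with h | h
  · left; rwa [abs_of_nonneg (by linarith)]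
  · right; rw [abs_of_nonpos (by linarith)]; linarith

lemma exists_nat_le_mul_le_succ {y : ℝ} (hy : y ∈ Icc (0 : ℝ) 1) {q : ℕ} (hq : 0 < q) :
    ∃ j < q, (j : ℝ) ≤ y * q ∧ y * q ≤ j + 1 := by
  have hq' : (0 : ℝ) < q := by exact_mod_cast hq
  rcases hy.2.lt_or_eq with hy1 | rfl
  · have hlt : y * q < q := by nlinarith
    refine ⟨⌊y * q⌋₊, (Nat.floor_lt (by nlinarith [hy.1])).2 (by exact_mod_cast hlt),
      Nat.floor_le (by nlinarith [hy.1]), (Nat.lt_floor_add_one _).le⟩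
  · refine ⟨q - 1, by omega, ?_, ?_⟩ <;> push_cast [Nat.one_le_iff_ne_zero.2 hq.ne'] <;> linarith

theorem exists_fract_mul_eq_of_coprime {θ : ℝ} {q a : ℕ} (ha : a.Coprime q)
    (hε : q * |q * θ - a| < 1) {j : ℕ} (hj : j < q) :
    ∃ i < q, Int.fract (i * θ) = (j + i * (q * θ - a)) / q := by
  rcases Nat.eq_zero_or_pos j with rfl | hj0
  · exact ⟨0, hj, by simp⟩
  obtain ⟨m, -, hm⟩ := Nat.exists_mul_mod_eq_of_coprime j ha (by omega)
  rw [Nat.mod_eq_of_lt hj] at hm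
  refine ⟨m % q, Nat.mod_lt _ (by omega), ?_⟩
  set i := m % q
  have hai : a * i % q = j := by rw [Nat.mul_mod, Nat.mod_mod, ← Nat.mul_mod, hm]
  obtain ⟨t, hdiv⟩ : ∃ t : ℕ, ((q * t + j : ℕ) : ℝ) = a * i :=
    ⟨a * i / q, by rw [← hai, Nat.div_add_mod]; push_cast; ring⟩
  have hq : (0 : ℝ) < q := by exact_mod_cast (show 0 < q by omega)
  have hi : |(i : ℝ) * (q * θ - a)| < 1 := by
    rw [abs_mul, Nat.abs_cast]
    have : (i : ℝ) ≤ q := by exact_mod_cast (Nat.mod_lt m (by omega)).le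
    nlinarith [abs_nonneg ((q : ℝ) * θ - a)]
  have hj1 : (1 : ℝ) ≤ j := by exact_mod_cast hj0
  have hjq : (j : ℝ) + 1 ≤ q := by exact_mod_cast hj
  rw [Int.fract_eq_iff]
  refine ⟨div_nonneg (by linarith [(abs_lt.1 hi).1]) hq.le,
    (div_lt_one hq).2 (by linarith [(abs_lt.1 hi).2]), t, ?_⟩
  push_cast at hdiv ⊢
  field_simp
  linarith

theorem exists_abs_sub_kron_le {θ : ℝ} {q a n i₀ : ℕ} (ha : a.Coprime q) (hqn : q ≤ n)
    (hqε : 1 / 3 ≤ q * |q * θ - a|) (hqε' : q * |q * θ - a| < 1)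
    (hi₀ : i₀ < n) (hi₀' : 1 - 2 * |q * θ - a| ≤ kron θ i₀) {y : ℝ} (hy : y ∈ Icc 0 1) :
    ∃ i < n, |y - kron θ i| ≤ 2 * |q * θ - a| := by
  set ε := (q : ℝ) * θ - a
  have hq : 0 < q := Nat.pos_of_ne_zero (by rintro rfl; norm_num at hqε)
  have hq' : (0 : ℝ) < q := by exact_mod_cast hq
  have hdisp : ∀ c : ℝ, |c| ≤ q → |c * ε / q| ≤ |ε| := fun c hc => by
    rw [abs_div, abs_mul, Nat.abs_cast, div_le_iff₀ hq']
    nlinarith [abs_nonneg ε]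
  have hgrid : ∀ j < q, ∃ i < q, kron θ i = j / q + i * ε / q := fun j hj => by
    obtain ⟨i, hi, h⟩ := exists_fract_mul_eq_of_coprime ha hqε' hj
    exact ⟨i, hi, by rw [kron, h, add_div]⟩
  obtain ⟨j, hj, hjy, hyj⟩ := exists_nat_le_mul_le_succ hy hq
  obtain ⟨iA, hiA, hA⟩ := hgrid j hj
  have huA := abs_le.1 (hdisp iA (by exact_mod_cast hiA.le))
  have hy' : y ∈ Icc ((j : ℝ) / q) ((j + 1) / q) :=
    ⟨(div_le_iff₀ hq').2 hjy, (le_div_iff₀ hq').2 hyj⟩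
  have h1q : 1 / (q : ℝ) ≤ 3 * |ε| := by
    rw [div_le_iff₀ hq']; linarith [hqε]
  suffices ∃ iB < n, (j + 1) / q - kron θ iB ≤ 2 * |ε| ∧ kron θ iB - kron θ iA ≤ 4 * |ε| by
    obtain ⟨iB, hiB, hb, hAB⟩ := this
    rcases abs_sub_le_or_abs_sub_le_of_mem_Icc (A := kron θ iA) hy' (by rw [hA]; linarith) hb
      (by linarith) with h | h
    exacts [⟨iA, by omega, h⟩, ⟨iB, hiB, h⟩]
  rcases Nat.lt_or_ge (j + 1) q with hj1 | hj1
  · obtain ⟨iB, hiB, hB⟩ := hgrid (j + 1) hj1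
    have huB := abs_le.1 (hdisp iB (by exact_mod_cast hiB.le))
    have huAB := abs_le.1 (hdisp ((iB : ℝ) - iA) (abs_sub_le_of_nonneg_of_le (by positivity)
      (by exact_mod_cast hiB.le) (by positivity) (by exact_mod_cast hiA.le)))
    rw [sub_mul, sub_div] at huAB
    refine ⟨iB, by omega, ?_, ?_⟩
    · rw [hB]; push_cast; linarith
    · rw [hB, hA]; push_cast; rw [add_div]; linarith
  · have hjq : (j : ℝ) + 1 = q := by exact_mod_cast (show j + 1 = q by omega)
    refine ⟨i₀, hi₀, ?_, ?_⟩
    · rw [hjq, div_self hq'.ne']; linarith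
    · have : kron θ i₀ < 1 := Int.fract_lt_one _
      rw [hA]
      have : (j : ℝ) / q = 1 - 1 / q := by rw [eq_sub_iff_add_eq, ← add_div, hjq, div_self hq'.ne']
      linarith

lemma fillDist_le {x : ℕ → ℝ} {n : ℕ} {r : ℝ}
    (h : ∀ y ∈ Icc (0 : ℝ) 1, ∃ i < n, |y - x i| ≤ r) : fillDist x n ≤ r := by
  have : Nonempty (Icc (0 : ℝ) 1) := ⟨⟨0, left_mem_Icc.2 zero_le_one⟩⟩
  refine ciSup_le fun ⟨y, hy⟩ => ?_
  obtain ⟨i, hi, hyi⟩ := h y hy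
  exact (ciInf_le ⟨0, by rintro _ ⟨_, rfl⟩; exact abs_nonneg _⟩ (⟨i, hi⟩ : Fin n)).trans hyi

lemma sqrt_five_sub_one_div_two : (√5 - 1) / 2 = -ψ := by
  rw [Real.goldenConj]; ring

lemma neg_goldenConj_pos : 0 < -ψ := neg_pos.2 Real.goldenConj_neg

lemma neg_goldenConj_lt_one : -ψ < 1 := by linarith [Real.neg_one_lt_goldenConj]

lemma four_sevenths_lt_neg_goldenConj : 4 / 7 < -ψ := by
  have : (15 / 7 : ℝ) < √5 := by rw [Real.lt_sqrt (by norm_num)]; norm_num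
  rw [Real.goldenConj]; linarith

lemma fib_succ_mul_neg_goldenConj (k : ℕ) :
    (Nat.fib (k + 1) : ℝ) * -ψ - Nat.fib k = -ψ ^ (k + 1) := by
  linear_combination -Real.goldenConj_mul_fib_succ_add_fib k

lemma sqrt_five_mul_fib_mul_neg_goldenConj_pow (p : ℕ) :
    √5 * (Nat.fib p * (-ψ) ^ p) = 1 - (-ψ ^ 2) ^ p := by
  have hφψ : φ * -ψ = 1 := by rw [mul_neg, Real.goldenRatio_mul_goldenConj, neg_neg]
  calc √5 * (Nat.fib p * (-ψ) ^ p) = (φ ^ p - ψ ^ p) * (-ψ) ^ p := by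
        rw [Real.coe_fib_eq]; field_simp
    _ = (φ * -ψ) ^ p - (ψ * -ψ) ^ p := by rw [mul_pow, mul_pow, sub_mul]
    _ = 1 - (-ψ ^ 2) ^ p := by rw [hφψ, one_pow, mul_neg, ← sq]

lemma fib_mul_neg_goldenConj_pow_lt_one (p : ℕ) : Nat.fib p * (-ψ) ^ p < 1 := by
  have h := sqrt_five_mul_fib_mul_neg_goldenConj_pow p
  have hpow : |(-ψ ^ 2) ^ p| ≤ 1 := by
    rw [abs_pow, abs_neg, abs_of_nonneg (sq_nonneg ψ)]
    exact pow_le_one₀ (sq_nonneg ψ) (by rw [Real.goldenConj_sq]; linarith [Real.goldenConj_neg])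
  have h5 : (2 : ℝ) < √5 := by rw [Real.lt_sqrt (by norm_num)]; norm_num
  nlinarith [(abs_le.1 hpow).1]

lemma one_div_three_le_fib_mul_neg_goldenConj_pow {p : ℕ} (hp : 2 ≤ p) :
    1 / 3 ≤ Nat.fib p * (-ψ) ^ p := by
  have h := sqrt_five_mul_fib_mul_neg_goldenConj_pow p
  have hpow : |(-ψ ^ 2) ^ p| ≤ ψ ^ 4 := by
    rw [abs_pow, abs_neg, abs_of_nonneg (sq_nonneg ψ), show ψ ^ 4 = (ψ ^ 2) ^ 2 by ring]
    exact pow_le_pow_of_le_one (sq_nonneg ψ)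
      (by rw [Real.goldenConj_sq]; linarith [Real.goldenConj_neg]) hp
  have h5 : √5 = 1 - 2 * ψ := by rw [Real.goldenConj]; ring
  have hψ4 : ψ ^ 4 = 3 * ψ + 2 := by nlinarith [Real.goldenConj_sq]
  nlinarith [(abs_le.1 hpow).2, four_sevenths_lt_neg_goldenConj, Real.goldenConj_neg]

lemma kron_neg_goldenConj_fib_of_even {e : ℕ} (he : Even e) (he0 : e ≠ 0) :
    kron (-ψ) (Nat.fib e) = 1 - ψ ^ e := by
  obtain ⟨k, rfl⟩ := Nat.exists_eq_add_one_of_ne_zero he0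
  have hpos : 0 < ψ ^ (k + 1) := he.pow_pos Real.goldenConj_ne_zero
  have hlt : ψ ^ (k + 1) < 1 := by
    rw [← he.neg_pow]; exact pow_lt_one₀ neg_goldenConj_pos.le neg_goldenConj_lt_one he0
  rw [kron, Int.fract_eq_iff]
  refine ⟨by linarith, by linarith, (Nat.fib k : ℤ) - 1, ?_⟩
  push_cast
  linear_combination fib_succ_mul_neg_goldenConj k

lemma exists_kron_neg_goldenConj_ge {p n : ℕ} (hp : 2 ≤ p) (hpn : Nat.fib p < n) :
    ∃ i < n, 1 - 2 * (-ψ) ^ p ≤ kron (-ψ) i := by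
  obtain ⟨e, he, hep, hpe⟩ : ∃ e, Even e ∧ e ≤ p ∧ p ≤ e + 1 := by
    rcases Nat.even_or_odd p with h | h
    · exact ⟨p, h, le_rfl, by omega⟩
    · exact ⟨p - 1, Nat.Odd.sub_odd h odd_one, by omega, by omega⟩
  refine ⟨Nat.fib e, (Nat.fib_mono hep).trans_lt hpn, ?_⟩
  rw [kron_neg_goldenConj_fib_of_even he (by rintro rfl; omega), ← he.neg_pow]
  have hψ := neg_goldenConj_pos
  suffices (-ψ) ^ e ≤ 2 * (-ψ) ^ p by linarith
  calc (-ψ) ^ e = (-ψ) ^ (e + 1) / -ψ := by rw [pow_succ, mul_div_cancel_right₀ _ hψ.ne']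
    _ ≤ (-ψ) ^ p / -ψ :=
        div_le_div_of_nonneg_right (pow_le_pow_of_le_one hψ.le neg_goldenConj_lt_one.le hpe) hψ.le
    _ ≤ 2 * (-ψ) ^ p := by
        rw [div_le_iff₀ hψ]
        nlinarith [pow_pos hψ p, four_sevenths_lt_neg_goldenConj]

lemma neg_goldenConj_pow_le_abs_kron_sub {p i j : ℕ} (hp : p ≠ 0) (hij : i < j)
    (hj : j < Nat.fib (p + 1)) : (-ψ) ^ p ≤ |kron (-ψ) i - kron (-ψ) j| := by
  obtain ⟨m, rfl⟩ := Nat.exists_eq_add_one_of_ne_zero hp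
  rw [show m + 1 + 1 = m + 2 from rfl] at hj
  obtain ⟨K, hK⟩ := exists_int_kron_sub_kron (-ψ) j i
  have hcassini : (Nat.fib (m + 2) : ℤ) * Nat.fib m - Nat.fib (m + 1) * Nat.fib (m + 1)
      = (-1) ^ (m + 1) := by
    have := Int.fib_succ_mul_fib_pred_sub_fib_sq (m + 1 : ℕ)
    rw [show ((m + 1 : ℕ) : ℤ) + 1 = (m + 2 : ℕ) by push_cast; ring,
      show ((m + 1 : ℕ) : ℤ) - 1 = (m : ℕ) by push_cast; ring, Int.natAbs_natCast] at this
    simp only [Int.fib_natCast] at this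
    linear_combination this
  have hbest := abs_mul_sub_le_abs_mul_sub_of_isUnit (θ := -ψ) (k := (j : ℤ) - i) (K := K)
    (q₁ := Nat.fib (m + 2)) (p₁ := Nat.fib (m + 1)) (q₂ := Nat.fib (m + 1)) (p₂ := Nat.fib m)
    (by positivity) (hcassini ▸ isUnit_neg_one.pow _) ?_ (by omega) (by omega)
  · rw [abs_sub_comm, hK]
    push_cast at hbest ⊢
    rwa [fib_succ_mul_neg_goldenConj, abs_neg, abs_pow, abs_of_neg Real.goldenConj_neg] at hbest
  · push_cast
    rw [fib_succ_mul_neg_goldenConj, fib_succ_mul_neg_goldenConj, neg_mul_neg, ← pow_add]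
    exact Odd.pow_nonpos ⟨m + 1, by ring⟩ Real.goldenConj_neg.le

lemma exists_abs_sub_kron_neg_goldenConj_le {p n : ℕ} (hp : 2 ≤ p) (hpn : Nat.fib p < n)
    {y : ℝ} (hy : y ∈ Icc 0 1) : ∃ i < n, |y - kron (-ψ) i| ≤ 2 * (-ψ) ^ p := by
  obtain ⟨k, rfl⟩ : ∃ k, p = k + 1 := ⟨p - 1, by omega⟩
  have hε : |(Nat.fib (k + 1) : ℝ) * -ψ - Nat.fib k| = (-ψ) ^ (k + 1) := by
    rw [fib_succ_mul_neg_goldenConj, abs_neg, abs_pow, abs_of_neg Real.goldenConj_neg]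
  obtain ⟨i₀, hi₀, hi₀'⟩ := exists_kron_neg_goldenConj_ge hp hpn
  have hlow := one_div_three_le_fib_mul_neg_goldenConj_pow hp
  have hupp := fib_mul_neg_goldenConj_pow_lt_one (k + 1)
  rw [← hε] at hlow hupp hi₀' ⊢
  exact exists_abs_sub_kron_le (Nat.fib_coprime_fib_succ k) hpn.le hlow hupp hi₀ hi₀' hy

lemma exists_fib_lt_le_fib_succ {n : ℕ} (hn : 2 ≤ n) :
    ∃ p, 2 ≤ p ∧ Nat.fib p < n ∧ n ≤ Nat.fib (p + 1) := by
  induction n, hn using Nat.le_induction with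
  | base => exact ⟨2, le_rfl, by decide, by decide⟩
  | succ n hn ih =>
    obtain ⟨p, hp, hpn, hnp⟩ := ih
    rcases hnp.lt_or_eq with hlt | rfl
    · exact ⟨p, hp, by omega, hlt⟩
    · refine ⟨p + 1, by omega, Nat.lt_succ_self _, ?_⟩
      rw [Nat.fib_add_two]
      have : 0 < Nat.fib p := Nat.fib_pos.2 (by omega)
      omega

/-- The golden-ratio Kronecker sequence is quasi-uniform with mesh ratio at
most `4`. -/
theorem kronecker_golden_quasi_uniform :
    ∀ n ≥ 2, fillDist (kron ((Real.sqrt 5 - 1) / 2)) n /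
      sepRad (kron ((Real.sqrt 5 - 1) / 2)) n ≤ 4 := by
  intro n hn
  rw [sqrt_five_sub_one_div_two]
  obtain ⟨p, hp, hpn, hnp⟩ := exists_fib_lt_le_fib_succ hn
  have hfill : fillDist (kron (-ψ)) n ≤ 2 * (-ψ) ^ p :=
    fillDist_le fun y hy => exists_abs_sub_kron_neg_goldenConj_le hp hpn hy
  have hsep : (-ψ) ^ p / 2 ≤ sepRad (kron (-ψ)) n := le_sepRad hn fun i j hij hjn =>
    neg_goldenConj_pow_le_abs_kron_sub (by omega) hij (hjn.trans_le hnp)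
  have hpos : 0 < (-ψ) ^ p := pow_pos neg_goldenConj_pos p
  rw [div_le_iff₀ (by linarith)]
  linarith
end
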